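/- arXiv:2310.06789 — 2 statements merged into one kernel-verified Lean document; each statement's English description precedes it below -/
import Mathlib

section
/- Let f(x) = (1/2)xᵀQx + lᵀx with Q positive semidefinite, D = diag(Q) with all diagonal entries positive, g proper closed convex, F = f + g, and suppose an optimal solution x* of min F exists. Let {x^t} be generated by the PDNM with 0 < β ≤ 1. Then F(x^t) − F(x*) ≤ M‖x⁰−x*‖²_{D'} / (2t) for all t ≥ 1, where M = max{1, ητ/β}·L₁, D' = D / max_i D_{i,i}, and L₁ is the Lipschitz constant of ∇f. -/
/-!
PDNM is a proximal gradient method in the metric `η^{k_t} D`. The three-point property of the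
scaled prox, the acceptance test (with `β ≤ 1`) and convexity of `f` give, for every `y`,
`F(x^{t+1}) ≤ F(y) + (η^{k_t}/2) (‖x^t - y‖²_D - ‖x^{t+1} - y‖²_D)`.
With `y = x^t` this makes `F(x^t)` nonincreasing; with `y = x*` it makes `‖x^t - x*‖_D`
nonincreasing and telescopes. Since `f(x + d) ≤ f(x) + ∇f(x)ᵀd + (τ/2)‖d‖²_D`, the line search
stops as soon as `β η^j ≥ τ`, so `η^{k_t} ≤ max{1, ητ/β}`. Summing the telescoping bounds gives
`t (F(x^t) - F*) ≤ (max{1, ητ/β}/2) ‖x⁰ - x*‖²_D`, and `‖·‖²_D ≤ L₁ ‖·‖²_{D'}` because every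
`D_ii = (∇f(e_i) - ∇f(0))_i` is at most `L₁`.
-/

open scoped RealInnerProductSpace

/-- Reinterpret a plain vector as an element of Euclidean space. -/
noncomputable def toE {n : ℕ} (v : Fin n → ℝ) : EuclideanSpace ℝ (Fin n) :=
  (WithLp.equiv 2 _).symm v

/-- The squared scaled norm `‖z‖²_H = zᵀHz`. -/
noncomputable def qnorm {n : ℕ} (H : Matrix (Fin n) (Fin n) ℝ)
    (z : EuclideanSpace ℝ (Fin n)) : ℝ :=
  dotProduct (fun i => z i) (H.mulVec (fun i => z i))

/-- `xp` is a point of the scaled proximal mapping `prox_g^H(u)`, i.e. a minimizer of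
`y ↦ g(y) + (1/2)‖y − u‖²_H`. -/
def IsProxPt {n : ℕ} (g : EuclideanSpace ℝ (Fin n) → EReal)
    (H : Matrix (Fin n) (Fin n) ℝ) (u xp : EuclideanSpace ℝ (Fin n)) : Prop :=
  ∀ y, g xp + (((1:ℝ)/2 * qnorm H (xp - u) : ℝ) : EReal)
      ≤ g y + (((1:ℝ)/2 * qnorm H (y - u) : ℝ) : EReal)

/-- The quadratic function `f(x) = (1/2)xᵀQx + lᵀx`. -/
noncomputable def fquad {n : ℕ} (Q : Matrix (Fin n) (Fin n) ℝ) (l : Fin n → ℝ)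
    (x : EuclideanSpace ℝ (Fin n)) : ℝ :=
  (1:ℝ)/2 * qnorm Q x + dotProduct l (fun i => x i)

/-- Its gradient `∇f(x) = Qx + l`. -/
noncomputable def gradquad {n : ℕ} (Q : Matrix (Fin n) (Fin n) ℝ) (l : Fin n → ℝ)
    (x : EuclideanSpace ℝ (Fin n)) : EuclideanSpace ℝ (Fin n) :=
  toE (Q.mulVec (fun i => x i) + l)

open Matrix Set Filter Topology

theorem EReal.ne_top_of_add_coe_le {u v : EReal} {r s : ℝ} (hv : v ≠ ⊤) (h : u + r ≤ v + s) :
    u ≠ ⊤ := by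
  rintro rfl
  induction v using EReal.rec with
  | bot => simp at h
  | coe v => exact absurd h (by simpa using (EReal.coe_lt_top (v + s)).ne)
  | top => exact hv rfl

theorem EReal.toReal_add_le_toReal_add {u v : EReal} {r s : ℝ} (hu : u ≠ ⊥) (hv : v ≠ ⊤)
    (h : u + r ≤ v + s) : u.toReal + r ≤ v.toReal + s := by
  lift u to ℝ using ⟨EReal.ne_top_of_add_coe_le hv h, hu⟩
  induction v using EReal.rec with
  | bot => exact absurd h (by simp)
  | coe v => exact_mod_cast h
  | top => exact absurd rfl hv

theorem EReal.coe_add_eq_coe_add_toReal {u : EReal} (hu : u ≠ ⊤) (hu' : u ≠ ⊥) (r : ℝ) :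
    (r : EReal) + u = ((r + u.toReal : ℝ) : EReal) := by
  rw [EReal.coe_add, EReal.coe_toReal hu hu']

theorem nonpos_of_forall_le_mul {X C : ℝ} (h : ∀ a ∈ Ioo (0 : ℝ) 1, X ≤ a * C) : X ≤ 0 := by
  have hlim : Tendsto (fun a : ℝ => a * C) (𝓝[>] 0) (𝓝 0) := by
    simpa using ((continuous_mul_const C).tendsto 0).mono_left nhdsWithin_le_nhds
  exact ge_of_tendsto hlim (eventually_of_mem (Ioo_mem_nhdsGT one_pos) h)

section QuadraticForm

variable {n : ℕ} {H : Matrix (Fin n) (Fin n) ℝ}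

noncomputable def qform (H : Matrix (Fin n) (Fin n) ℝ) :
    LinearMap.BilinForm ℝ (EuclideanSpace ℝ (Fin n)) :=
  (toLinearMap₂' ℝ H).compl₁₂ (WithLp.linearEquiv 2 ℝ (Fin n → ℝ)).toLinearMap
    (WithLp.linearEquiv 2 ℝ (Fin n → ℝ)).toLinearMap

theorem qform_apply (z w : EuclideanSpace ℝ (Fin n)) :
    qform H z w = WithLp.ofLp z ⬝ᵥ H *ᵥ WithLp.ofLp w :=
  toLinearMap₂'_apply' H _ _

theorem qnorm_eq_qform (z : EuclideanSpace ℝ (Fin n)) : qnorm H z = qform H z z :=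
  (qform_apply z z).symm

theorem qform_comm (hH : H.IsSymm) (z w : EuclideanSpace ℝ (Fin n)) :
    qform H z w = qform H w z := by
  rw [qform_apply, qform_apply, dotProduct_mulVec, ← mulVec_transpose, hH.eq, dotProduct_comm]

theorem qnorm_add (hH : H.IsSymm) (z w : EuclideanSpace ℝ (Fin n)) :
    qnorm H (z + w) = qnorm H z + 2 * qform H z w + qnorm H w := by
  simp only [qnorm_eq_qform, map_add, LinearMap.add_apply, qform_comm hH w z]
  ring

theorem qnorm_sub_comm (z w : EuclideanSpace ℝ (Fin n)) :
    qnorm H (z - w) = qnorm H (w - z) := by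
  simp only [qnorm_eq_qform, map_sub, LinearMap.sub_apply]
  ring

theorem qnorm_self_sub (z : EuclideanSpace ℝ (Fin n)) : qnorm H (z - z) = 0 := by
  simp [qnorm_eq_qform]

theorem qnorm_smul_matrix (c : ℝ) (z : EuclideanSpace ℝ (Fin n)) :
    qnorm (c • H) z = c * qnorm H z := by
  simp only [qnorm, smul_mulVec, dotProduct_smul, smul_eq_mul]

theorem qnorm_convex_combination (a : ℝ) (y x u : EuclideanSpace ℝ (Fin n)) :
    qnorm H (a • y + (1 - a) • x - u)
      = a * qnorm H (y - u) + (1 - a) * qnorm H (x - u) - a * (1 - a) * qnorm H (y - x) := by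
  have hsplit : a • y + (1 - a) • x - u = a • (y - u) + (1 - a) • (x - u) := by
    simp only [smul_sub, sub_smul, one_smul]; abel
  rw [hsplit, show y - x = (y - u) - (x - u) by abel]
  simp only [qnorm_eq_qform, map_add, map_sub, map_smul, LinearMap.add_apply,
    LinearMap.sub_apply, LinearMap.smul_apply, smul_eq_mul]
  ring

theorem qnorm_diagonal (d : Fin n → ℝ) (z : EuclideanSpace ℝ (Fin n)) :
    qnorm (diagonal d) z = ∑ i, d i * z i ^ 2 := by
  simp only [qnorm, dotProduct, mulVec_diagonal]
  exact Finset.sum_congr rfl fun i _ => by ring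

theorem qnorm_diagonal_nonneg {d : Fin n → ℝ} (hd : ∀ i, 0 ≤ d i) (z : EuclideanSpace ℝ (Fin n)) :
    0 ≤ qnorm (diagonal d) z := by
  rw [qnorm_diagonal]
  exact Finset.sum_nonneg fun i _ => mul_nonneg (hd i) (sq_nonneg _)

theorem qnorm_diagonal_pos {d : Fin n → ℝ} (hd : ∀ i, 0 < d i) {z : EuclideanSpace ℝ (Fin n)}
    (hz : z ≠ 0) : 0 < qnorm (diagonal d) z := by
  obtain ⟨i, hi⟩ : ∃ i, z i ≠ 0 := by
    by_contra! h; exact hz (PiLp.ext h)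
  rw [qnorm_diagonal]
  exact Finset.sum_pos' (fun i _ => mul_nonneg (hd i).le (sq_nonneg _))
    ⟨i, Finset.mem_univ _, mul_pos (hd i) (by positivity)⟩

end QuadraticForm

section QuadraticObjective

variable {n : ℕ} {Q : Matrix (Fin n) (Fin n) ℝ} {l : Fin n → ℝ}

theorem qnorm_nonneg_of_posSemidef (hQ : Q.PosSemidef) (z : EuclideanSpace ℝ (Fin n)) :
    0 ≤ qnorm Q z := by
  simpa [qnorm] using hQ.dotProduct_mulVec_nonneg (WithLp.ofLp z)

theorem inner_gradquad (x d : EuclideanSpace ℝ (Fin n)) :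
    ⟪gradquad Q l x, d⟫ = qform Q d x + l ⬝ᵥ WithLp.ofLp d := by
  rw [EuclideanSpace.inner_eq_star_dotProduct, star_trivial, qform_apply, dotProduct_comm l]
  exact dotProduct_add _ _ _

theorem fquad_add (hQ : Q.IsSymm) (x d : EuclideanSpace ℝ (Fin n)) :
    fquad Q l (x + d) = fquad Q l x + ⟪gradquad Q l x, d⟫ + 1 / 2 * qnorm Q d := by
  rw [inner_gradquad, fquad, fquad, qnorm_add hQ, qform_comm hQ d x, WithLp.ofLp_add,
    dotProduct_add]
  ring

theorem fquad_add_inner_le (hQ : Q.PosSemidef) (x y : EuclideanSpace ℝ (Fin n)) :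
    fquad Q l x + ⟪gradquad Q l x, y - x⟫ ≤ fquad Q l y := by
  have h := fquad_add (l := l) (isHermitian_iff_isSymm.mp hQ.1) x (y - x)
  rw [add_sub_cancel] at h
  linarith [qnorm_nonneg_of_posSemidef hQ (y - x)]

def rayleighQuotients (Q D : Matrix (Fin n) (Fin n) ℝ) : Set ℝ :=
  {r | ∃ v : Fin n → ℝ, v ≠ 0 ∧ r = v ⬝ᵥ Q *ᵥ v / v ⬝ᵥ D *ᵥ v}

theorem qnorm_le_mul_qnorm_diagonal {d : Fin n → ℝ} (hd : ∀ i, 0 < d i) {τ : ℝ}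
    (hτ : τ ∈ upperBounds (rayleighQuotients Q (diagonal d))) (z : EuclideanSpace ℝ (Fin n)) :
    qnorm Q z ≤ τ * qnorm (diagonal d) z := by
  rcases eq_or_ne z 0 with rfl | hz
  · simp [qnorm]
  · exact (div_le_iff₀ (qnorm_diagonal_pos hd hz)).mp
      (hτ ⟨WithLp.ofLp z, mt (WithLp.ofLp_eq_zero 2).mp hz, rfl⟩)

theorem backtracking_holds_of_le_mul_pow (hQ : Q.IsSymm) {d : Fin n → ℝ} (hd : ∀ i, 0 < d i)
    {τ β η : ℝ} (hτ : τ ∈ upperBounds (rayleighQuotients Q (diagonal d))) {j : ℕ}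
    (hj : τ ≤ β * η ^ j) (x xc : EuclideanSpace ℝ (Fin n)) :
    fquad Q l xc ≤ fquad Q l x + ⟪gradquad Q l x, xc - x⟫
      + β / 2 * qnorm (η ^ j • diagonal d) (xc - x) := by
  have h := fquad_add (l := l) hQ x (xc - x)
  rw [add_sub_cancel] at h
  rw [h, qnorm_smul_matrix]
  have hτd := qnorm_le_mul_qnorm_diagonal hd hτ (xc - x)
  have hD := qnorm_diagonal_nonneg (fun i => (hd i).le) (xc - x)
  nlinarith [mul_le_mul_of_nonneg_right hj hD]

theorem pow_le_max_of_backtracking (hQ : Q.IsSymm) {d : Fin n → ℝ} (hd : ∀ i, 0 < d i)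
    {τ β η : ℝ} (hτ : τ ∈ upperBounds (rayleighQuotients Q (diagonal d))) (hη : 0 < η)
    (hβ : 0 < β) {x : EuclideanSpace ℝ (Fin n)} {xc : ℕ → EuclideanSpace ℝ (Fin n)} {k : ℕ}
    (hsmallest : ∀ j < k, ¬ (fquad Q l (xc j) ≤ fquad Q l x + ⟪gradquad Q l x, xc j - x⟫
      + β / 2 * qnorm (η ^ j • diagonal d) (xc j - x))) :
    η ^ k ≤ max 1 (η * τ / β) := by
  rcases k with _ | m
  · exact pow_zero η ▸ le_max_left _ _
  · have hm : β * η ^ m < τ := by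
      by_contra! h
      exact hsmallest m m.lt_succ_self (backtracking_holds_of_le_mul_pow hQ hd hτ h x (xc m))
    refine le_max_of_le_right ?_
    rw [pow_succ, le_div_iff₀ hβ]
    nlinarith

theorem diag_le_of_lipschitz_gradquad {L : ℝ}
    (hlip : ∀ z w, ‖gradquad Q l z - gradquad Q l w‖ ≤ L * ‖z - w‖) (i : Fin n) : Q i i ≤ L := by
  have h := hlip (EuclideanSpace.single i 1) 0
  rw [sub_zero, PiLp.norm_single, norm_one, mul_one] at h
  have hi : (gradquad Q l (EuclideanSpace.single i 1) - gradquad Q l 0) i = Q i i := by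
    simp [gradquad, toE, mulVec, dotProduct]
  calc Q i i ≤ ‖(gradquad Q l (EuclideanSpace.single i 1) - gradquad Q l 0) i‖ :=
        hi ▸ Real.le_norm_self _
    _ ≤ ‖gradquad Q l (EuclideanSpace.single i 1) - gradquad Q l 0‖ := PiLp.norm_apply_le _ i
    _ ≤ L := h

end QuadraticObjective

def IsConvexEReal {n : ℕ} (g : EuclideanSpace ℝ (Fin n) → EReal) : Prop :=
  ∀ (z w : EuclideanSpace ℝ (Fin n)) (a b : ℝ), 0 ≤ a → 0 ≤ b →
    a + b = 1 → g (a • z + b • w) ≤ (a : EReal) * g z + (b : EReal) * g w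

section Prox

variable {n : ℕ} {g : EuclideanSpace ℝ (Fin n) → EReal} {H : Matrix (Fin n) (Fin n) ℝ}
  {u xp : EuclideanSpace ℝ (Fin n)}

theorem IsProxPt.ne_top (hp : IsProxPt g H u xp) {z : EuclideanSpace ℝ (Fin n)}
    (hz : g z ≠ ⊤) : g xp ≠ ⊤ :=
  EReal.ne_top_of_add_coe_le hz (hp z)

theorem IsProxPt.three_point (hg_nebot : ∀ z, g z ≠ ⊥)
    (hg_convex : IsConvexEReal g) (hp : IsProxPt g H u xp) {y : EuclideanSpace ℝ (Fin n)}
    (hy : g y ≠ ⊤) :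
    (g xp).toReal + 1 / 2 * qnorm H (xp - u) + 1 / 2 * qnorm H (xp - y)
      ≤ (g y).toReal + 1 / 2 * qnorm H (y - u) := by
  have hgxp : g xp = ((g xp).toReal : EReal) :=
    (EReal.coe_toReal (hp.ne_top hy) (hg_nebot xp)).symm
  have hgy : g y = ((g y).toReal : EReal) := (EReal.coe_toReal hy (hg_nebot y)).symm
  -- test the prox inequality against `a • y + (1 - a) • xp` and let `a → 0`
  refine sub_nonpos.mp (nonpos_of_forall_le_mul (C := qnorm H (xp - y) / 2) ?_)
  rintro a ⟨ha0, ha1⟩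
  set w := a • y + (1 - a) • xp
  have hconv : g w ≤ ((a * (g y).toReal + (1 - a) * (g xp).toReal : ℝ) : EReal) := by
    have h := hg_convex y xp a (1 - a) ha0.le (by linarith) (by ring)
    rwa [hgy, hgxp, ← EReal.coe_mul, ← EReal.coe_mul, ← EReal.coe_add] at h
  have hgw : g w ≠ ⊤ := ne_top_of_le_ne_top (EReal.coe_ne_top _) hconv
  have hgw_le := EReal.toReal_le_toReal hconv (hg_nebot w) (EReal.coe_ne_top _)
  rw [EReal.toReal_coe] at hgw_le
  have hprox := EReal.toReal_add_le_toReal_add (hg_nebot xp) hgw (hp w)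
  rw [qnorm_convex_combination, qnorm_sub_comm y xp] at hprox
  -- multiplying the claim by `a > 0` turns it into the sum of `hprox` and `hgw_le`
  have hscaled : a * ((g xp).toReal + 1 / 2 * qnorm H (xp - u) + 1 / 2 * qnorm H (xp - y)
      - ((g y).toReal + 1 / 2 * qnorm H (y - u)) - a * (qnorm H (xp - y) / 2)) ≤ 0 := by
    nlinarith
  linarith [nonpos_of_mul_nonpos_right hscaled ha0]

end Prox

section Descent

variable {n : ℕ} {Q : Matrix (Fin n) (Fin n) ℝ} {l : Fin n → ℝ}
  {g : EuclideanSpace ℝ (Fin n) → EReal}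

theorem IsProxPt.descent (hQ : Q.PosSemidef) (hg_nebot : ∀ z, g z ≠ ⊥)
    (hg_convex : IsConvexEReal g) {H : Matrix (Fin n) (Fin n) ℝ} (hH : H.IsSymm)
    (hHnn : ∀ z, 0 ≤ qnorm H z) (hHdet : IsUnit H.det) {β : ℝ} (hβ : β ≤ 1)
    {x xp y : EuclideanSpace ℝ (Fin n)}
    (hp : IsProxPt g H (x - toE (H⁻¹ *ᵥ WithLp.ofLp (gradquad Q l x))) xp)
    (hacc : fquad Q l xp ≤ fquad Q l x + ⟪gradquad Q l x, xp - x⟫ + β / 2 * qnorm H (xp - x))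
    (hy : g y ≠ ⊤) :
    fquad Q l xp + (g xp).toReal
      ≤ fquad Q l y + (g y).toReal + 1 / 2 * (qnorm H (x - y) - qnorm H (xp - y)) := by
  set w := toE (H⁻¹ *ᵥ WithLp.ofLp (gradquad Q l x))
  have hw : ∀ z, qform H z w = ⟪gradquad Q l x, z⟫ := fun z => by
    rw [qform_apply, EuclideanSpace.inner_eq_star_dotProduct, star_trivial]
    simp [w, toE, mulVec_mulVec, mul_nonsing_inv _ hHdet]
  have h3 := hp.three_point hg_nebot hg_convex hy
  rw [show xp - (x - w) = (xp - x) + w by abel, show y - (x - w) = (y - x) + w by abel,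
    qnorm_add hH, qnorm_add hH, hw, hw, qnorm_sub_comm y x] at h3
  have hf := fquad_add_inner_le (l := l) hQ x y
  have hq := mul_le_mul_of_nonneg_right hβ (hHnn (xp - x))
  linarith

theorem IsProxPt.descent_of_scaled_diagonal (hQ : Q.PosSemidef) (hg_nebot : ∀ z, g z ≠ ⊥)
    (hg_convex : IsConvexEReal g) {d : Fin n → ℝ} (hd : ∀ i, 0 < d i) {η β : ℝ} (hη : 0 < η)
    (hβ : β ≤ 1) {j : ℕ} {x xp y : EuclideanSpace ℝ (Fin n)}
    (hp : IsProxPt g (η ^ j • diagonal d)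
      (x - toE ((η ^ j • diagonal d)⁻¹ *ᵥ WithLp.ofLp (gradquad Q l x))) xp)
    (hacc : fquad Q l xp ≤ fquad Q l x + ⟪gradquad Q l x, xp - x⟫
      + β / 2 * qnorm (η ^ j • diagonal d) (xp - x))
    (hy : g y ≠ ⊤) :
    fquad Q l xp + (g xp).toReal ≤ fquad Q l y + (g y).toReal
      + η ^ j / 2 * (qnorm (diagonal d) (x - y) - qnorm (diagonal d) (xp - y)) := by
  have hηj := pow_pos hη j
  have hnn : ∀ z, 0 ≤ qnorm (η ^ j • diagonal d) z := fun z => by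
    rw [qnorm_smul_matrix]
    exact mul_nonneg hηj.le (qnorm_diagonal_nonneg (fun i => (hd i).le) z)
  have hdet : IsUnit (η ^ j • diagonal d).det := by
    rw [det_smul, det_diagonal]
    exact (mul_ne_zero (pow_ne_zero _ hηj.ne')
      (Finset.prod_ne_zero_iff.mpr fun i _ => (hd i).ne')).isUnit
  have h := hp.descent hQ hg_nebot hg_convex ((isSymm_diagonal d).smul _) hnn hdet hβ hacc hy
  rw [qnorm_smul_matrix, qnorm_smul_matrix] at h
  linarith

end Descent

theorem sub_le_div_of_telescoping {F Δ h : ℕ → ℝ} {Fstar c : ℝ} (hF : Antitone F)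
    (hFstar : ∀ s, Fstar ≤ F s) (hh : ∀ s, 0 < h s) (hhc : ∀ s, h s ≤ c) (hΔ : ∀ s, 0 ≤ Δ s)
    (hstep : ∀ s, F s - Fstar ≤ h s / 2 * (Δ s - Δ (s + 1))) (t : ℕ) :
    F t - Fstar ≤ c * Δ 0 / (2 * (t + 1 : ℕ)) := by
  have hΔanti : ∀ s, Δ (s + 1) ≤ Δ s := fun s => by
    by_contra! hlt
    have := mul_neg_of_pos_of_neg (half_pos (hh s)) (sub_neg.mpr hlt)
    linarith [hstep s, hFstar s]
  have hstep' : ∀ s, F s - Fstar ≤ c / 2 * (Δ s - Δ (s + 1)) := fun s =>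
    (hstep s).trans (by gcongr; exacts [sub_nonneg.mpr (hΔanti s), hhc s])
  have hsum : ((t + 1 : ℕ) : ℝ) * (F t - Fstar) ≤ c / 2 * (Δ 0 - Δ (t + 1)) :=
    calc ((t + 1 : ℕ) : ℝ) * (F t - Fstar) = ∑ _s ∈ Finset.range (t + 1), (F t - Fstar) := by
          rw [Finset.sum_const, Finset.card_range, nsmul_eq_mul]
      _ ≤ ∑ s ∈ Finset.range (t + 1), (F s - Fstar) := Finset.sum_le_sum fun s hs => by
          linarith [hF (Nat.lt_succ_iff.mp (Finset.mem_range.mp hs))]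
      _ ≤ ∑ s ∈ Finset.range (t + 1), c / 2 * (Δ s - Δ (s + 1)) :=
          Finset.sum_le_sum fun s _ => hstep' s
      _ = c / 2 * (Δ 0 - Δ (t + 1)) := by rw [← Finset.mul_sum, Finset.sum_range_sub']
  have hc : 0 ≤ c := (hh 0).le.trans (hhc 0)
  rw [le_div_iff₀ (by positivity)]
  linarith [mul_nonneg hc (hΔ (t + 1))]

theorem qnorm_diagonal_le_mul_qnorm_inv_sup'_smul {n : ℕ} {Q : Matrix (Fin n) (Fin n) ℝ}
    {l : Fin n → ℝ} (hQd : ∀ i, 0 < Q i i) (hne : (Finset.univ : Finset (Fin n)).Nonempty)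
    {L : ℝ} (hlip : ∀ z w, ‖gradquad Q l z - gradquad Q l w‖ ≤ L * ‖z - w‖)
    (z : EuclideanSpace ℝ (Fin n)) :
    qnorm (diagonal fun i => Q i i) z
      ≤ L * qnorm ((Finset.univ.sup' hne fun i => Q i i)⁻¹ • diagonal fun i => Q i i) z := by
  have hM : 0 < Finset.univ.sup' hne fun i => Q i i := by
    obtain ⟨i, hi⟩ := id hne
    exact (hQd i).trans_le (Finset.le_sup' (fun i => Q i i) hi)
  have hML : (Finset.univ.sup' hne fun i => Q i i) ≤ L :=
    Finset.sup'_le _ _ fun i _ => diag_le_of_lipschitz_gradquad hlip i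
  rw [qnorm_smul_matrix, ← mul_assoc, ← div_eq_mul_inv]
  exact le_mul_of_one_le_left (qnorm_diagonal_nonneg (fun i => (hQd i).le) z)
    ((one_le_div hM).mpr hML)

theorem stmt9_general {n : ℕ} (hn : 0 < n) (Q : Matrix (Fin n) (Fin n) ℝ) (l : Fin n → ℝ)
    (g : EuclideanSpace ℝ (Fin n) → EReal)
    (η β τ L₁ : ℝ) (x : ℕ → EuclideanSpace ℝ (Fin n))
    (xcand : ℕ → ℕ → EuclideanSpace ℝ (Fin n)) (k : ℕ → ℕ)
    (xstar : EuclideanSpace ℝ (Fin n))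
    (hQ : Q.PosSemidef) (hQd : ∀ i, 0 < Q i i)
    (hg_proper : ∃ z, g z ≠ ⊤) (hg_nebot : ∀ z, g z ≠ ⊥)
    (hg_convex : ∀ (z w : EuclideanSpace ℝ (Fin n)) (a b : ℝ), 0 ≤ a → 0 ≤ b →
      a + b = 1 → g (a • z + b • w) ≤ (a : EReal) * g z + (b : EReal) * g w)
    (hη : 1 < η) (hβ0 : 0 < β) (hβ1 : β ≤ 1)
    (hτ : IsLUB {r : ℝ | ∃ v : Fin n → ℝ, v ≠ 0 ∧
      r = dotProduct v (Q.mulVec v) /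
        dotProduct v ((Matrix.diagonal fun i => Q i i).mulVec v)} τ)
    (hlip : ∀ z w : EuclideanSpace ℝ (Fin n),
      ‖gradquad Q l z - gradquad Q l w‖ ≤ L₁ * ‖z - w‖)
    (hprox : ∀ (t j : ℕ),
      IsProxPt g (η ^ j • Matrix.diagonal fun i => Q i i)
        (x t - toE ((η ^ j • Matrix.diagonal fun i => Q i i)⁻¹.mulVec
          fun i => gradquad Q l (x t) i)) (xcand t j))
    (hstep : ∀ t : ℕ, x (t + 1) = xcand t (k t))
    (haccept : ∀ t : ℕ,
      fquad Q l (xcand t (k t)) ≤ fquad Q l (x t)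
        + ⟪gradquad Q l (x t), xcand t (k t) - x t⟫
        + β / 2 * qnorm (η ^ k t • Matrix.diagonal fun i => Q i i)
            (xcand t (k t) - x t))
    (hsmallest : ∀ (t : ℕ), ∀ j < k t,
      ¬ (fquad Q l (xcand t j) ≤ fquad Q l (x t)
        + ⟪gradquad Q l (x t), xcand t j - x t⟫
        + β / 2 * qnorm (η ^ j • Matrix.diagonal fun i => Q i i) (xcand t j - x t)))
    (hopt : ∀ y, (fquad Q l xstar : EReal) + g xstar ≤ (fquad Q l y : EReal) + g y) :
    ∀ t : ℕ, 1 ≤ t →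
      ((fquad Q l (x t) : EReal) + g (x t)) - ((fquad Q l xstar : EReal) + g xstar)
        ≤ ((max 1 (η * τ / β) * L₁ *
            qnorm ((Finset.univ.sup' ⟨⟨0, hn⟩, Finset.mem_univ _⟩ fun i => Q i i)⁻¹
              • Matrix.diagonal fun i => Q i i) (x 0 - xstar) / (2 * t) : ℝ) : EReal) := by
  intro t ht
  obtain ⟨m, rfl⟩ : ∃ m, t = m + 1 := ⟨t - 1, by omega⟩
  obtain ⟨z0, hz0⟩ := hg_proper
  have hη0 : 0 < η := by linarith
  have hgx : ∀ s, g (x (s + 1)) ≠ ⊤ := fun s => hstep s ▸ (hprox s (k s)).ne_top hz0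
  have hopt_comm : ∀ y, g xstar + (fquad Q l xstar : EReal) ≤ g y + (fquad Q l y : EReal) :=
    fun y => (add_comm _ _).le.trans ((hopt y).trans (add_comm _ _).le)
  have hgstar : g xstar ≠ ⊤ := EReal.ne_top_of_add_coe_le hz0 (hopt_comm z0)
  have hopt' : ∀ y, g y ≠ ⊤ → fquad Q l xstar + (g xstar).toReal ≤ fquad Q l y + (g y).toReal :=
    fun y hy => by linarith [EReal.toReal_add_le_toReal_add (hg_nebot _) hy (hopt_comm y)]
  have hdesc : ∀ s y, g y ≠ ⊤ → fquad Q l (x (s + 1)) + (g (x (s + 1))).toReal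
      ≤ fquad Q l y + (g y).toReal + η ^ k s / 2 * (qnorm (diagonal fun i => Q i i) (x s - y)
        - qnorm (diagonal fun i => Q i i) (x (s + 1) - y)) := fun s y hy => by
    rw [hstep s]
    exact (hprox s (k s)).descent_of_scaled_diagonal hQ hg_nebot hg_convex hQd hη0 hβ1
      (haccept s) hy
  have hrate := sub_le_div_of_telescoping
    (F := fun s => fquad Q l (x (s + 1)) + (g (x (s + 1))).toReal)
    (Δ := fun s => qnorm (diagonal fun i => Q i i) (x s - xstar))
    (antitone_nat_of_succ_le fun s => by
      have h := hdesc (s + 1) (x (s + 1)) (hgx s)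
      rw [qnorm_self_sub] at h
      linarith [mul_nonneg (pow_pos hη0 (k (s + 1))).le
        (qnorm_diagonal_nonneg (fun i => (hQd i).le) (x (s + 1 + 1) - x (s + 1)))])
    (fun s => hopt' _ (hgx s)) (fun s => pow_pos hη0 (k s))
    (fun s => pow_le_max_of_backtracking (isHermitian_iff_isSymm.mp hQ.1) hQd hτ.1 hη0 hβ0
      (hsmallest s))
    (fun s => qnorm_diagonal_nonneg (fun i => (hQd i).le) _)
    (fun s => by linarith [hdesc s xstar hgstar]) m
  rw [EReal.coe_add_eq_coe_add_toReal (hgx m) (hg_nebot _),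
    EReal.coe_add_eq_coe_add_toReal hgstar (hg_nebot _), ← EReal.coe_sub, EReal.coe_le_coe_iff]
  refine hrate.trans ?_
  rw [mul_assoc]
  gcongr
  exact qnorm_diagonal_le_mul_qnorm_inv_sup'_smul hQd _ hlip _

/-- `O(1/t)` sublinear convergence of PDNM for a convex quadratic `f`
with positive diagonal: `F(x^t) − F(x*) ≤ M‖x⁰−x*‖²_{D'}/(2t)` with
`M = max{1, ητ/β}L₁` and `D' = D / maxᵢ Dᵢᵢ`. -/
theorem stmt9 {n : ℕ} (hn : 0 < n) (Q : Matrix (Fin n) (Fin n) ℝ) (l : Fin n → ℝ)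
    (g : EuclideanSpace ℝ (Fin n) → EReal)
    (η β τ L₁ : ℝ) (x : ℕ → EuclideanSpace ℝ (Fin n))
    (xcand : ℕ → ℕ → EuclideanSpace ℝ (Fin n)) (k : ℕ → ℕ)
    (xstar : EuclideanSpace ℝ (Fin n))
    (hQ : Q.PosSemidef) (hQd : ∀ i, 0 < Q i i)
    (hg_proper : ∃ z, g z ≠ ⊤) (hg_nebot : ∀ z, g z ≠ ⊥)
    (hg_closed : LowerSemicontinuous g)
    (hg_convex : ∀ (z w : EuclideanSpace ℝ (Fin n)) (a b : ℝ), 0 ≤ a → 0 ≤ b →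
      a + b = 1 → g (a • z + b • w) ≤ (a : EReal) * g z + (b : EReal) * g w)
    (hη : 1 < η) (hβ0 : 0 < β) (hβ1 : β ≤ 1)
    (hτ : IsLUB {r : ℝ | ∃ v : Fin n → ℝ, v ≠ 0 ∧
      r = dotProduct v (Q.mulVec v) /
        dotProduct v ((Matrix.diagonal fun i => Q i i).mulVec v)} τ)
    (hlip : ∀ z w : EuclideanSpace ℝ (Fin n),
      ‖gradquad Q l z - gradquad Q l w‖ ≤ L₁ * ‖z - w‖)
    (hprox : ∀ (t j : ℕ),
      IsProxPt g (η ^ j • Matrix.diagonal fun i => Q i i)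
        (x t - toE ((η ^ j • Matrix.diagonal fun i => Q i i)⁻¹.mulVec
          fun i => gradquad Q l (x t) i)) (xcand t j))
    (hstep : ∀ t : ℕ, x (t + 1) = xcand t (k t))
    (haccept : ∀ t : ℕ,
      fquad Q l (xcand t (k t)) ≤ fquad Q l (x t)
        + ⟪gradquad Q l (x t), xcand t (k t) - x t⟫
        + β / 2 * qnorm (η ^ k t • Matrix.diagonal fun i => Q i i)
            (xcand t (k t) - x t))
    (hsmallest : ∀ (t : ℕ), ∀ j < k t,
      ¬ (fquad Q l (xcand t j) ≤ fquad Q l (x t)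
        + ⟪gradquad Q l (x t), xcand t j - x t⟫
        + β / 2 * qnorm (η ^ j • Matrix.diagonal fun i => Q i i) (xcand t j - x t)))
    (hopt : ∀ y, (fquad Q l xstar : EReal) + g xstar ≤ (fquad Q l y : EReal) + g y) :
    ∀ t : ℕ, 1 ≤ t →
      ((fquad Q l (x t) : EReal) + g (x t)) - ((fquad Q l xstar : EReal) + g xstar)
        ≤ ((max 1 (η * τ / β) * L₁ *
            qnorm ((Finset.univ.sup' ⟨⟨0, hn⟩, Finset.mem_univ _⟩ fun i => Q i i)⁻¹
              • Matrix.diagonal fun i => Q i i) (x 0 - xstar) / (2 * t) : ℝ) : EReal) :=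
  stmt9_general hn Q l g η β τ L₁ x xcand k xstar hQ hQd hg_proper hg_nebot hg_convex hη hβ0 hβ1 hτ
    hlip hprox hstep haccept hsmallest hopt
end

section
/- Let g : ℝⁿ → (-∞,∞] be proper closed and directionally differentiable, f differentiable, H positive definite, and suppose x* ∈ prox_g^{H}(x̄ − H⁻¹∇f(x̄)) where x̄ and x* satisfy ‖∇f(x*) − ∇f(x̄) + H(x̄ − x*)‖₂ ≤ ε. Then x* is an ε-stationary point of F = f + g, i.e., F'(x*; d) ≥ −ε‖d‖₂ for all d in the feasible cone of dom g at x*. -/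
open scoped RealInnerProductSpace

open Filter Topology
open scoped Matrix

/-! Comparing the prox objective at `x*` and at `x* + ηd` gives
`(g(x* + ηd) − g(x*))/η ≥ −dᵀH(x* − u) − (η/2) dᵀHd`, so in the limit `g'(x*; d) ≥ −dᵀH(x* − u)`.
For `u = x̄ − H⁻¹∇f(x̄)` one has `H(x* − u) = ∇f(x*) − v` with `v` the residual
`∇f(x*) − ∇f(x̄) + H(x̄ − x*)`, hence `∇f(x*)ᵀd + g'(x*; d) ≥ vᵀd ≥ −‖v‖‖d‖ ≥ −ε‖d‖`. -/

variable {n : ℕ} {H : Matrix (Fin n) (Fin n) ℝ}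

lemma qnorm_add_smul (hH : H.IsSymm) (z d : EuclideanSpace ℝ (Fin n)) (η : ℝ) :
    qnorm H (z + η • d) = qnorm H z + 2 * η * (d.ofLp ⬝ᵥ H *ᵥ z.ofLp) + η ^ 2 * qnorm H d := by
  have hswap : z.ofLp ⬝ᵥ H *ᵥ d.ofLp = d.ofLp ⬝ᵥ H *ᵥ z.ofLp := by
    rw [Matrix.dotProduct_mulVec, ← Matrix.mulVec_transpose, hH.eq, dotProduct_comm]
  simp only [qnorm, WithLp.ofLp_add, WithLp.ofLp_smul, Matrix.mulVec_add, Matrix.mulVec_smul,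
    add_dotProduct, dotProduct_add, smul_dotProduct, dotProduct_smul, smul_eq_mul, hswap]
  ring

lemma mulVec_sub_sub_toE_inv_mulVec (hH : IsUnit H.det) (x y p : EuclideanSpace ℝ (Fin n)) :
    H *ᵥ (x - (y - toE (H⁻¹ *ᵥ p.ofLp))).ofLp = (p - toE (H *ᵥ (y - x).ofLp)).ofLp := by
  simp only [toE, WithLp.equiv_symm_apply, WithLp.ofLp_sub, Matrix.mulVec_sub,
    Matrix.mulVec_mulVec, H.mul_nonsing_inv hH, Matrix.one_mulVec]
  abel

namespace IsProxPt

variable {g : EuclideanSpace ℝ (Fin n) → EReal} {u xp : EuclideanSpace ℝ (Fin n)}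

lemma ne_top_s19 (h : IsProxPt g H u xp) {z : EuclideanSpace ℝ (Fin n)} (hz : g z ≠ ⊤) :
    g xp ≠ ⊤ := by
  intro htop
  have hle := h z
  rw [htop, EReal.top_add_of_ne_bot (EReal.coe_ne_bot _), top_le_iff] at hle
  exact EReal.add_ne_top hz (EReal.coe_ne_top _) hle

lemma neg_dotProduct_le_slope (h : IsProxPt g H u xp) (hH : H.IsSymm) (hbot : ∀ z, g z ≠ ⊥)
    (hxp : g xp ≠ ⊤) {d : EuclideanSpace ℝ (Fin n)} {η : ℝ} (hη : 0 < η)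
    (hy : g (xp + η • d) ≠ ⊤) :
    ((-(d.ofLp ⬝ᵥ H *ᵥ (xp - u).ofLp) - η / 2 * qnorm H d : ℝ) : EReal)
      ≤ ((η⁻¹ : ℝ) : EReal) * (g (xp + η • d) - g xp) := by
  obtain ⟨a, ha⟩ : ∃ a : ℝ, g (xp + η • d) = a := ⟨_, (EReal.coe_toReal hy (hbot _)).symm⟩
  obtain ⟨b, hb⟩ : ∃ b : ℝ, g xp = b := ⟨_, (EReal.coe_toReal hxp (hbot _)).symm⟩
  have hle := h (xp + η • d)
  rw [ha, hb, add_sub_right_comm, qnorm_add_smul hH, ← EReal.coe_add, ← EReal.coe_add,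
    EReal.coe_le_coe_iff] at hle
  rw [ha, hb, ← EReal.coe_sub, ← EReal.coe_mul, EReal.coe_le_coe_iff, le_inv_mul_iff₀ hη]
  nlinarith

lemma neg_dotProduct_le_dirDeriv (h : IsProxPt g H u xp) (hH : H.IsSymm) (hbot : ∀ z, g z ≠ ⊥)
    (hxp : g xp ≠ ⊤) {d : EuclideanSpace ℝ (Fin n)} {δ : ℝ} (hδ : 0 < δ)
    (hfeas : ∀ η ∈ Set.Ioo (0:ℝ) δ, g (xp + η • d) ≠ ⊤) {L : EReal}
    (hL : Tendsto (fun η : ℝ => ((η⁻¹ : ℝ) : EReal) * (g (xp + η • d) - g xp)) (𝓝[>] 0) (𝓝 L)) :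
    ((-(d.ofLp ⬝ᵥ H *ᵥ (xp - u).ofLp) : ℝ) : EReal) ≤ L := by
  have hbound : Tendsto (fun η : ℝ => -(d.ofLp ⬝ᵥ H *ᵥ (xp - u).ofLp) - η / 2 * qnorm H d)
      (𝓝[>] 0) (𝓝 (-(d.ofLp ⬝ᵥ H *ᵥ (xp - u).ofLp))) := by
    refine tendsto_nhdsWithin_of_tendsto_nhds ?_
    have hcont : Continuous fun η : ℝ => -(d.ofLp ⬝ᵥ H *ᵥ (xp - u).ofLp) - η / 2 * qnorm H d := by
      fun_prop
    simpa using hcont.tendsto 0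
  refine le_of_tendsto_of_tendsto (EReal.tendsto_coe.mpr hbound) hL ?_
  filter_upwards [Ioo_mem_nhdsGT hδ] with η hη
  exact h.neg_dotProduct_le_slope hH hbot hxp hη.1 (hfeas η hη)

end IsProxPt

theorem stmt19_general {n : ℕ} (f : EuclideanSpace ℝ (Fin n) → ℝ)
    (g : EuclideanSpace ℝ (Fin n) → EReal)
    (gd : EuclideanSpace ℝ (Fin n) → EReal)
    (H : Matrix (Fin n) (Fin n) ℝ) (ε : ℝ)
    (xbar xstar : EuclideanSpace ℝ (Fin n))
    (hg_proper : ∃ z, g z ≠ ⊤) (hg_nebot : ∀ z, g z ≠ ⊥)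
    (hH : H.PosDef)
    (hxstar : IsProxPt g H (xbar - toE (H⁻¹.mulVec fun i => gradient f xbar i)) xstar)
    (happrox : ‖gradient f xstar - gradient f xbar
      + toE (H.mulVec fun i => (xbar - xstar) i)‖ ≤ ε)
    (hgd : ∀ d : EuclideanSpace ℝ (Fin n),
      (∃ δ > (0:ℝ), ∀ η ∈ Set.Ioo (0:ℝ) δ, g (xstar + η • d) ≠ ⊤) →
      Tendsto (fun η : ℝ => ((η⁻¹ : ℝ) : EReal) * (g (xstar + η • d) - g xstar))
        (𝓝[>] 0) (𝓝 (gd d))) :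
    ∀ d : EuclideanSpace ℝ (Fin n),
      (∃ δ > (0:ℝ), ∀ η ∈ Set.Ioo (0:ℝ) δ, g (xstar + η • d) ≠ ⊤) →
      ((-(ε * ‖d‖) : ℝ) : EReal) ≤ ((⟪gradient f xstar, d⟫ : ℝ) : EReal) + gd d := by
  rintro d ⟨δ, hδ, hdom⟩
  obtain ⟨z, hz⟩ := hg_proper
  set v := gradient f xstar - gradient f xbar + toE (H.mulVec fun i => (xbar - xstar) i)
  have hgd_ge := hxstar.neg_dotProduct_le_dirDeriv (Matrix.isHermitian_iff_isSymm.mp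
    hH.isHermitian) hg_nebot (hxstar.ne_top_s19 hz) hδ hdom (hgd d ⟨δ, hδ, hdom⟩)
  have hHw : d.ofLp ⬝ᵥ H *ᵥ (xstar - (xbar - toE (H⁻¹ *ᵥ (gradient f xbar).ofLp))).ofLp
      = ⟪gradient f xstar - v, d⟫ := by
    rw [mulVec_sub_sub_toE_inv_mulVec (H.isUnit_iff_isUnit_det.mp hH.isUnit),
      EuclideanSpace.inner_eq_star_dotProduct, star_trivial]
    congr 2
    simp only [v]
    abel
  have hv : -(ε * ‖d‖) ≤ ⟪v, d⟫ := calc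
    -(ε * ‖d‖) ≤ -(‖v‖ * ‖d‖) := by gcongr
    _ ≤ ⟪v, d⟫ := neg_le_of_abs_le (abs_real_inner_le_norm v d)
  calc ((-(ε * ‖d‖) : ℝ) : EReal)
      ≤ ((⟪gradient f xstar, d⟫ + -⟪gradient f xstar - v, d⟫ : ℝ) : EReal) := by
        rw [inner_sub_left]
        exact_mod_cast (by linarith)
    _ ≤ ((⟪gradient f xstar, d⟫ : ℝ) : EReal) + gd d := by
        rw [EReal.coe_add, ← hHw]
        gcongr

/-- if `x* ∈ prox_g^H(x̄ − H⁻¹∇f(x̄))` and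
`‖∇f(x*) − ∇f(x̄) + H(x̄ − x*)‖ ≤ ε`, then `x*` is an `ε`-stationary point of
`F = f + g`: `F'(x*;d) = ∇f(x*)ᵀd + g'(x*;d) ≥ −ε‖d‖` for every direction `d` in the
feasible cone of `dom g` at `x*` (with `g'(x*;·)` the directional derivative). -/
theorem stmt19 {n : ℕ} (f : EuclideanSpace ℝ (Fin n) → ℝ)
    (g : EuclideanSpace ℝ (Fin n) → EReal)
    (gd : EuclideanSpace ℝ (Fin n) → EReal)
    (H : Matrix (Fin n) (Fin n) ℝ) (ε : ℝ)
    (xbar xstar : EuclideanSpace ℝ (Fin n))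
    (hf : Differentiable ℝ f)
    (hg_proper : ∃ z, g z ≠ ⊤) (hg_nebot : ∀ z, g z ≠ ⊥)
    (hg_closed : LowerSemicontinuous g)
    (hH : H.PosDef) (hε : 0 < ε)
    (hxstar : IsProxPt g H (xbar - toE (H⁻¹.mulVec fun i => gradient f xbar i)) xstar)
    (happrox : ‖gradient f xstar - gradient f xbar
      + toE (H.mulVec fun i => (xbar - xstar) i)‖ ≤ ε)
    (hgd : ∀ d : EuclideanSpace ℝ (Fin n),
      (∃ δ > (0:ℝ), ∀ η ∈ Set.Ioo (0:ℝ) δ, g (xstar + η • d) ≠ ⊤) →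
      Tendsto (fun η : ℝ => ((η⁻¹ : ℝ) : EReal) * (g (xstar + η • d) - g xstar))
        (𝓝[>] 0) (𝓝 (gd d))) :
    ∀ d : EuclideanSpace ℝ (Fin n),
      (∃ δ > (0:ℝ), ∀ η ∈ Set.Ioo (0:ℝ) δ, g (xstar + η • d) ≠ ⊤) →
      ((-(ε * ‖d‖) : ℝ) : EReal) ≤ ((⟪gradient f xstar, d⟫ : ℝ) : EReal) + gd d :=
  stmt19_general f g gd H ε xbar xstar hg_proper hg_nebot hH hxstar happrox hgd
end
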